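/- Let $\Omega\subset\mathbb{R}^3$ be open, let $s:\Omega\to\mathbb{R}$ be differentiable, and let $n:\Omega\to\mathbb{R}^3$ be differentiable with $|n(x)|=1$ for all $x\in\Omega$. Define $Q(x)=s(x)\big(n(x)\otimes n(x)-\tfrac13\mathbf{1}\big)$. Then at every $x\in\Omega$, $|\nabla Q(x)|^2=\tfrac23|\nabla s(x)|^2+2\,s(x)^2\,|\nabla n(x)|^2$. -/

import Mathlib

/-!
Differentiating `Q = s (n ⊗ n - 𝟙/3)` along `e_k` gives
`∂ₖs (n ⊗ n - 𝟙/3) + s (∂ₖn ⊗ n + n ⊗ ∂ₖn)`. Differentiating `|n|² = 1` shows `∂ₖn ⊥ n`, which makes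
these two tensors orthogonal, with squared norms `(2/3) (∂ₖs)²` and `2 s² |∂ₖn|²`.
-/

open Matrix

noncomputable def uniaxialQ (s : (Fin 3 → ℝ) → ℝ) (n : (Fin 3 → ℝ) → Fin 3 → ℝ)
    (x : Fin 3 → ℝ) : Matrix (Fin 3) (Fin 3) ℝ :=
  s x • (vecMulVec (n x) (n x) - (1 / 3 : ℝ) • (1 : Matrix (Fin 3) (Fin 3) ℝ))

theorem sum_mul_fderiv_eq_zero_of_eventually_dotProduct_self_eq {E ι : Type*}
    [NormedAddCommGroup E] [NormedSpace ℝ E] [Fintype ι] {n : E → ι → ℝ} {x : E} {c : ℝ}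
    (hn : ∀ i, DifferentiableAt ℝ (fun y => n y i) x) (hc : ∀ᶠ y in nhds x, n y ⬝ᵥ n y = c)
    (v : E) : ∑ i, n x i * fderiv ℝ (fun y => n y i) x v = 0 := by
  have hderiv : HasFDerivAt (fun y => n y ⬝ᵥ n y)
      (∑ i, (n x i • fderiv ℝ (fun y => n y i) x + n x i • fderiv ℝ (fun y => n y i) x)) x :=
    HasFDerivAt.fun_sum fun i _ => (hn i).hasFDerivAt.mul (hn i).hasFDerivAt
  have hconst : HasFDerivAt (fun y => n y ⬝ᵥ n y) (0 : E →L[ℝ] ℝ) x :=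
    (hasFDerivAt_const c x).congr_of_eventuallyEq hc
  have := congrArg (fun L : E →L[ℝ] ℝ => L v) (hderiv.unique hconst)
  simp only [_root_.sum_apply, _root_.add_apply, _root_.smul_apply, smul_eq_mul,
    _root_.zero_apply, Finset.sum_add_distrib] at this
  linarith

theorem uniaxialQ_apply (s : (Fin 3 → ℝ) → ℝ) (n : (Fin 3 → ℝ) → Fin 3 → ℝ)
    (x : Fin 3 → ℝ) (i j : Fin 3) :
    uniaxialQ s n x i j = s x * (n x i * n x j - 1 / 3 * (1 : Matrix (Fin 3) (Fin 3) ℝ) i j) := by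
  simp [uniaxialQ, vecMulVec_apply]

theorem hasFDerivAt_uniaxialQ_apply {s : (Fin 3 → ℝ) → ℝ} {n : (Fin 3 → ℝ) → Fin 3 → ℝ}
    {x : Fin 3 → ℝ} (hs : DifferentiableAt ℝ s x) (hn : ∀ i, DifferentiableAt ℝ (fun y => n y i) x)
    (i j : Fin 3) :
    HasFDerivAt (fun y => uniaxialQ s n y i j)
      (s x • (n x i • fderiv ℝ (fun y => n y j) x + n x j • fderiv ℝ (fun y => n y i) x) +
        (n x i * n x j - 1 / 3 * (1 : Matrix (Fin 3) (Fin 3) ℝ) i j) • fderiv ℝ s x) x := by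
  simp only [uniaxialQ_apply]
  exact hs.hasFDerivAt.mul (((hn i).hasFDerivAt.mul (hn j).hasFDerivAt).sub_const _)

theorem sum_sq_uniaxial_variation {n b : Fin 3 → ℝ} (a σ : ℝ) (hn : n ⬝ᵥ n = 1)
    (hb : n ⬝ᵥ b = 0) :
    ∑ i, ∑ j, (a * (n i * n j - 1 / 3 * (1 : Matrix (Fin 3) (Fin 3) ℝ) i j) +
        σ * (b i * n j + n i * b j)) ^ 2 = 2 / 3 * a ^ 2 + 2 * σ ^ 2 * ∑ i, b i ^ 2 := by
  simp only [dotProduct, Fin.sum_univ_three, one_apply] at *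
  norm_num [Fin.ext_iff]
  linear_combination
    (a ^ 2 * (n 0 * n 0 + n 1 * n 1 + n 2 * n 2 + 1 / 3) +
      2 * σ ^ 2 * (b 0 ^ 2 + b 1 ^ 2 + b 2 ^ 2)) * hn +
    (2 * a * σ * (2 * (n 0 * n 0 + n 1 * n 1 + n 2 * n 2) - 2 / 3) +
      2 * σ ^ 2 * (n 0 * b 0 + n 1 * b 1 + n 2 * b 2)) * hb

/-- if `s` and `n` are differentiable on an open set `Ω ⊂ ℝ³` with `|n| = 1`
on `Ω`, and `Q = s(n⊗n - 1/3·𝟙)`, then at every `x ∈ Ω`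
`|∇Q|² = (2/3)|∇s|² + 2s²|∇n|²` (with `|∇Q|² = ∑ Q_{ij,k}²`, `|∇n|² = ∑ n_{i,k}²`). -/
theorem uniaxial_gradient_identity (Ω : Set (Fin 3 → ℝ)) (hΩ : IsOpen Ω)
    (s : (Fin 3 → ℝ) → ℝ) (n : (Fin 3 → ℝ) → Fin 3 → ℝ)
    (hs : ∀ x ∈ Ω, DifferentiableAt ℝ s x)
    (hn : ∀ x ∈ Ω, DifferentiableAt ℝ n x)
    (hunit : ∀ x ∈ Ω, n x ⬝ᵥ n x = 1) :
    ∀ x ∈ Ω,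
      ∑ i : Fin 3, ∑ j : Fin 3, ∑ k : Fin 3,
          (fderiv ℝ (fun y => uniaxialQ s n y i j) x (Pi.single k 1)) ^ 2
        = (2 / 3) * ∑ k : Fin 3, (fderiv ℝ s x (Pi.single k 1)) ^ 2 +
          2 * s x ^ 2 * ∑ i : Fin 3, ∑ k : Fin 3,
            (fderiv ℝ (fun y => n y i) x (Pi.single k 1)) ^ 2 := by
  intro x hx
  have hni i : DifferentiableAt ℝ (fun y => n y i) x := differentiableAt_pi.mp (hn x hx) i
  set dn : Fin 3 → Fin 3 → ℝ := fun k i => fderiv ℝ (fun y => n y i) x (Pi.single k 1)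
  have horth k : n x ⬝ᵥ dn k = 0 :=
    sum_mul_fderiv_eq_zero_of_eventually_dotProduct_self_eq hni
      (Filter.eventually_of_mem (hΩ.mem_nhds hx) hunit) _
  have hQ i j k : fderiv ℝ (fun y => uniaxialQ s n y i j) x (Pi.single k 1) =
      fderiv ℝ s x (Pi.single k 1) * (n x i * n x j - 1 / 3 * (1 : Matrix (Fin 3) (Fin 3) ℝ) i j) +
        s x * (dn k i * n x j + n x i * dn k j) := by
    rw [(hasFDerivAt_uniaxialQ_apply (hs x hx) hni i j).fderiv]
    simp only [_root_.add_apply, _root_.smul_apply, smul_eq_mul, dn]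
    ring
  simp only [hQ]
  rw [Finset.sum_congr rfl fun i _ => Finset.sum_comm, Finset.sum_comm,
    Finset.sum_congr rfl fun k _ => sum_sq_uniaxial_variation _ _ (hunit x hx) (horth k),
    Finset.sum_add_distrib, ← Finset.mul_sum, ← Finset.mul_sum]
  congr 2
  exact Finset.sum_comm
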